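/- In the double-Ising expansion, the determinant of the submatrix K^E of the Kac–Ward-type Hermitian matrix K obtained by removing the rows and columns indexed by an odd-cardinality set E of boundary edges vanishes: if |E| is odd, then det K^E = 0. -/

import Mathlib

/-!
After rescaling the row of each oriented edge `e` by the unit vector `u_e` pointing along `e`,
the matrix `K = J · KW` becomes skew-symmetric. For the long entries this is `u_e + u_ē = 0`.
For two edges `e, e'` leaving a common vertex, the half-angle phases of the two entries are
mutually inverse with square `-u_{e'} / u_e`; this fails only when `e` and `e'` point in the same
direction (the turning angle then sits on the branch cut of `arg`), which planarity excludes.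
The rescaling commutes with taking principal submatrices, and removing an odd set `E` from the
even set of oriented edges leaves a skew-symmetric matrix of odd size, whose determinant vanishes.
-/

open scoped Classical
open Matrix

noncomputable section

variable {V F : Type*}

/-- Origin (tail) of an oriented edge `(f, b)` of the graph with endpoint map `ends`. -/
def oTail (ends : F → V × V) (p : F × Bool) : V :=
  if p.2 then (ends p.1).1 else (ends p.1).2

/-- Head (terminal vertex) of an oriented edge. -/
def oHead (ends : F → V × V) (p : F × Bool) : V :=
  if p.2 then (ends p.1).2 else (ends p.1).1

/-- Reversal of an oriented edge. -/
def oRev (p : F × Bool) : F × Bool := (p.1, !p.2)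

/-- Direction (as a complex number) of an oriented edge in the straight-line drawing
given by the vertex positions `pos`. -/
def oDir (ends : F → V × V) (pos : V → ℂ) (p : F × Bool) : ℂ :=
  pos (oHead ends p) - pos (oTail ends p)

/-- The angle (argument of the direction) of an oriented edge. -/
def oAng (ends : F → V × V) (pos : V → ℂ) (p : F × Bool) : ℝ :=
  Complex.arg (oDir ends pos p)

/-- A dimer configuration (perfect matching) on the terminal graph `G^K`: a fixed-point
free involution of the oriented edges of `G`, matching each oriented edge either to its
reversal (a "long" dimer) or to another oriented edge with the same origin
(a "short" dimer). -/
def IsTerminalMatching (ends : F → V × V) (m : F × Bool → F × Bool) : Prop :=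
  Function.Involutive m ∧ (∀ p, m p ≠ p) ∧
    ∀ p, m p = oRev p ∨ oTail ends (m p) = oTail ends p

/-- An even subgraph: a set of edges in which every vertex has even degree. -/
def IsEvenSubgraph [Fintype F] [DecidableEq V] (ends : F → V × V) (P : Finset F) :
    Prop :=
  ∀ v : V, Even ((P.filter (fun f => (ends f).1 = v)).card +
    (P.filter (fun f => (ends f).2 = v)).card)

/-- The weight `x^K(D)` of a dimer configuration: long edges have weight `1` and the
short edge joining `e, e'` has weight `(x_e x_{e'})^{1/2}`. -/
def matchWeight [Fintype F] (x : F → ℝ) (m : F × Bool → F × Bool) : ℝ :=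
  ∏ p ∈ Finset.univ.filter (fun p : F × Bool => m p ≠ oRev p), Real.sqrt (x p.1)

/-- `p` is the endpoint of a short dimer of `m` with the smaller angle. -/
def isLow (ends : F → V × V) (pos : V → ℂ) (m : F × Bool → F × Bool)
    (p : F × Bool) : Prop :=
  m p ≠ oRev p ∧ oAng ends pos p < oAng ends pos (m p)

/-- The number `t(D)` of pairs of (short) dimers of `m` that cross in the drawing:
two chords at the same vertex cross iff their angles interleave in the cyclic order. -/
def selfCross [Fintype F] (ends : F → V × V) (pos : V → ℂ)
    (m : F × Bool → F × Bool) : ℕ :=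
  (Finset.univ.filter (fun pr : (F × Bool) × (F × Bool) =>
    isLow ends pos m pr.1 ∧ isLow ends pos m pr.2 ∧
    oTail ends pr.1 = oTail ends pr.2 ∧
    oAng ends pos pr.1 < oAng ends pos pr.2 ∧
    oAng ends pos pr.2 < oAng ends pos (m pr.1) ∧
    oAng ends pos (m pr.1) < oAng ends pos (m pr.2))).card

/-- The Kac–Ward transition matrix `T`, indexed by oriented edges:
`T_{e,e'} = exp((i/2)·w(e,e'))·(x_e x_{e'})^{1/2}` if `t(e) = o(e')` and `e' ≠ ē`,
and `0` otherwise, where `w(e,e') ∈ (-π,π)` is the turning angle from `e` to `e'`. -/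
def KWT [DecidableEq V] [DecidableEq F] (ends : F → V × V) (pos : V → ℂ)
    (x : F → ℝ) : Matrix (F × Bool) (F × Bool) ℂ :=
  Matrix.of fun e e' =>
    if oHead ends e = oTail ends e' ∧ e' ≠ oRev e then
      Complex.exp (Complex.I *
          ((Complex.arg (oDir ends pos e' / oDir ends pos e) / 2 : ℝ) : ℂ)) *
        ((Real.sqrt (x e.1 * x e'.1) : ℝ) : ℂ)
    else 0

/-- The Kac–Ward matrix `KW(G,x) = I - T`. -/
def KacWard [DecidableEq V] [DecidableEq F] (ends : F → V × V) (pos : V → ℂ)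
    (x : F → ℝ) : Matrix (F × Bool) (F × Bool) ℂ :=
  1 - KWT ends pos x

/-- The permutation matrix `J` exchanging each oriented edge with its reversal. -/
def revMat (F : Type*) [DecidableEq F] : Matrix (F × Bool) (F × Bool) ℂ :=
  Matrix.of fun e e' => if e' = oRev e then 1 else 0

namespace Matrix

variable {n R : Type*} [Fintype n] [DecidableEq n] [CommRing R] [IsAddTorsionFree R]

theorem det_eq_zero_of_transpose_eq_neg {A : Matrix n n R} (hA : Aᵀ = -A)
    (hn : Odd (Fintype.card n)) : A.det = 0 := by
  refine self_eq_neg.mp ?_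
  conv_lhs => rw [← det_transpose, hA, det_neg, hn.neg_one_pow, neg_one_mul]

theorem det_eq_zero_of_diagonal_mul_skew {A : Matrix n n R} {d : n → R}
    (hd : ∀ i, IsUnit (d i)) (hA : ∀ i j, d i * A i j + d j * A j i = 0)
    (hn : Odd (Fintype.card n)) : A.det = 0 := by
  have hskew : (diagonal d * A)ᵀ = -(diagonal d * A) := by
    ext i j
    simp only [transpose_apply, neg_apply, diagonal_mul]
    exact eq_neg_of_add_eq_zero_left (hA j i)
  have h := det_eq_zero_of_transpose_eq_neg hskew hn
  rwa [det_mul, det_diagonal, (IsUnit.prod_univ_iff.mpr hd).mul_right_eq_zero] at h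

end Matrix

theorem Fintype.odd_card_subtype_notMem {α : Type*} [Fintype α] [DecidableEq α]
    (hα : Even (Fintype.card α)) {E : Finset α} (hE : Odd E.card) :
    Odd (Fintype.card {a // a ∉ E}) := by
  rw [Fintype.card_subtype_compl, Fintype.card_coe]
  exact Nat.Even.sub_odd (Finset.card_le_univ E) hα hE

namespace Complex

theorem exp_half_arg_sq {ζ : ℂ} (hζ : ζ ≠ 0) :
    exp (I * ((ζ.arg / 2 : ℝ) : ℂ)) ^ 2 = ζ / (‖ζ‖ : ℂ) := by
  have hnorm : (‖ζ‖ : ℂ) ≠ 0 := by simpa using hζ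
  rw [eq_div_iff hnorm, sq, ← exp_add]
  calc exp (I * ((ζ.arg / 2 : ℝ) : ℂ) + I * ((ζ.arg / 2 : ℝ) : ℂ)) * ‖ζ‖
      = ‖ζ‖ * exp (ζ.arg * I) := by push_cast; ring_nf
    _ = ζ := norm_mul_exp_arg_mul_I ζ

theorem exp_half_arg_inv {ζ : ℂ} (hζ : ζ.arg ≠ Real.pi) :
    exp (I * ((ζ⁻¹.arg / 2 : ℝ) : ℂ)) = (exp (I * ((ζ.arg / 2 : ℝ) : ℂ)))⁻¹ := by
  rw [arg_inv, if_neg hζ, ← exp_neg]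
  push_cast
  ring_nf

theorem arg_div_neg_ne_pi {z w : ℂ} (h : ¬SameRay ℝ z w) : (w / -z).arg ≠ Real.pi := by
  intro hπ
  apply h
  rw [SameRay.sameRay_comm, sameRay_iff_arg_div_eq_zero, arg_eq_zero_iff]
  rw [arg_eq_pi_iff, div_neg, neg_re, neg_im] at hπ
  exact ⟨by linarith [hπ.1], by linarith [hπ.2]⟩

theorem unit_mul_exp_half_arg_add_eq_zero {z w : ℂ} (hz : z ≠ 0) (hw : w ≠ 0)
    (h : ¬SameRay ℝ z w) :
    z / (‖z‖ : ℂ) * exp (I * (((w / -z).arg / 2 : ℝ) : ℂ)) +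
      w / (‖w‖ : ℂ) * exp (I * (((z / -w).arg / 2 : ℝ) : ℂ)) = 0 := by
  have hinv : z / -w = (w / -z)⁻¹ := by rw [inv_div, div_neg, neg_div]
  set σ := exp (I * (((w / -z).arg / 2 : ℝ) : ℂ))
  have hσ : σ ≠ 0 := exp_ne_zero _
  have hsq : σ ^ 2 = (w / -z) / (‖w / -z‖ : ℂ) := exp_half_arg_sq (by simp [hz, hw])
  have hz' : (‖z‖ : ℂ) ≠ 0 := by simpa using hz
  have hw' : (‖w‖ : ℂ) ≠ 0 := by simpa using hw
  rw [hinv, exp_half_arg_inv (arg_div_neg_ne_pi h)]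
  have hfactor : z / (‖z‖ : ℂ) * σ + w / (‖w‖ : ℂ) * σ⁻¹ =
      σ⁻¹ * (z / (‖z‖ : ℂ) * σ ^ 2 + w / (‖w‖ : ℂ)) := by
    field_simp
  rw [hfactor, hsq, norm_div, norm_neg]
  push_cast
  field_simp
  ring

end Complex

theorem SameRay.nonempty_openSegment_inter {E : Type*} [AddCommGroup E] [Module ℝ E]
    {z w : E} (h : SameRay ℝ z w) (hz : z ≠ 0) (hw : w ≠ 0) (a : E) :
    (openSegment ℝ a (a + z) ∩ openSegment ℝ a (a + w)).Nonempty := by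
  obtain ⟨r, s, hr, hs, hrs⟩ := h.exists_pos hz hw
  have hcoeff : (r / (r + s)) • z = (s / (r + s)) • w := by
    rw [div_eq_inv_mul, div_eq_inv_mul, mul_smul, mul_smul, hrs]
  refine ⟨a + (r / (r + s)) • z, ?_, ?_⟩ <;> rw [openSegment_eq_image', add_sub_cancel_left]
  · exact ⟨r / (r + s), ⟨by positivity, (div_lt_one (by positivity)).mpr (by linarith)⟩, rfl⟩
  · exact ⟨s / (r + s), ⟨by positivity, (div_lt_one (by positivity)).mpr (by linarith)⟩,
      by rw [hcoeff]⟩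

@[simp]
theorem oRev_oRev (p : F × Bool) : oRev (oRev p) = p := by
  simp [oRev]

@[simp]
theorem oHead_oRev (ends : F → V × V) (p : F × Bool) : oHead ends (oRev p) = oTail ends p := by
  cases p with | mk f b => cases b <;> rfl

@[simp]
theorem oTail_oRev (ends : F → V × V) (p : F × Bool) : oTail ends (oRev p) = oHead ends p := by
  cases p with | mk f b => cases b <;> rfl

@[simp]
theorem oDir_oRev (ends : F → V × V) (pos : V → ℂ) (p : F × Bool) :
    oDir ends pos (oRev p) = -oDir ends pos p := by
  simp [oDir]

theorem eq_or_eq_oRev_of_fst_eq {p q : F × Bool} (h : p.1 = q.1) : q = p ∨ q = oRev p := by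
  obtain ⟨f, b⟩ := p
  obtain ⟨g, c⟩ := q
  obtain rfl : f = g := h
  cases b <;> cases c <;> simp [oRev]

theorem oDir_ne_zero {ends : F → V × V} {pos : V → ℂ} (hinj : Function.Injective pos)
    (hloop : ∀ f : F, (ends f).1 ≠ (ends f).2) (p : F × Bool) : oDir ends pos p ≠ 0 := by
  obtain ⟨f, b⟩ := p
  intro h
  have := hinj (sub_eq_zero.mp h)
  cases b
  · exact hloop f this
  · exact hloop f this.symm

theorem openSegment_oTail_oHead (ends : F → V × V) (pos : V → ℂ) (p : F × Bool) :
    openSegment ℝ (pos (oTail ends p)) (pos (oHead ends p)) =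
      openSegment ℝ (pos (ends p.1).1) (pos (ends p.1).2) := by
  obtain ⟨f, b⟩ := p
  cases b
  · exact openSegment_symm ℝ _ _
  · rfl

theorem not_sameRay_oDir {ends : F → V × V} {pos : V → ℂ}
    (hdir : ∀ p : F × Bool, oDir ends pos p ≠ 0)
    (hplanar : ∀ f g : F, f ≠ g → ∀ z : ℂ,
      z ∈ openSegment ℝ (pos (ends f).1) (pos (ends f).2) →
      z ∈ openSegment ℝ (pos (ends g).1) (pos (ends g).2) → False)
    {e e' : F × Bool} (htail : oTail ends e = oTail ends e') (hne : e.1 ≠ e'.1) :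
    ¬SameRay ℝ (oDir ends pos e) (oDir ends pos e') := by
  intro h
  obtain ⟨q, hq, hq'⟩ := h.nonempty_openSegment_inter (hdir e) (hdir e') (pos (oTail ends e))
  have hhead : ∀ p, pos (oTail ends p) + oDir ends pos p = pos (oHead ends p) :=
    fun p => add_sub_cancel _ _
  rw [hhead, openSegment_oTail_oHead] at hq
  rw [htail, hhead, openSegment_oTail_oHead] at hq'
  exact hplanar e.1 e'.1 hne q hq hq'

def unitDir (ends : F → V × V) (pos : V → ℂ) (p : F × Bool) : ℂ :=
  oDir ends pos p / (‖oDir ends pos p‖ : ℂ)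

theorem unitDir_oRev (ends : F → V × V) (pos : V → ℂ) (p : F × Bool) :
    unitDir ends pos (oRev p) = -unitDir ends pos p := by
  simp [unitDir, neg_div]

theorem unitDir_ne_zero {ends : F → V × V} {pos : V → ℂ} {p : F × Bool}
    (hp : oDir ends pos p ≠ 0) : unitDir ends pos p ≠ 0 :=
  div_ne_zero hp (by simpa using hp)

section KacWard

variable [DecidableEq V] [Fintype F] [DecidableEq F]

theorem revMat_mul_apply (A : Matrix (F × Bool) (F × Bool) ℂ) (e e' : F × Bool) :
    (revMat F * A) e e' = A (oRev e) e' := by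
  rw [mul_apply, Finset.sum_eq_single (oRev e)]
  · simp [revMat]
  · intro p _ hp
    simp [revMat, hp]
  · simp

theorem revMat_mul_kacWard_apply (ends : F → V × V) (pos : V → ℂ) (x : F → ℝ)
    (e e' : F × Bool) :
    (revMat F * KacWard ends pos x) e e' =
      (if e' = oRev e then 1 else 0) -
        if oTail ends e = oTail ends e' ∧ e' ≠ e then
          Complex.exp (Complex.I *
              ((Complex.arg (oDir ends pos e' / -oDir ends pos e) / 2 : ℝ) : ℂ)) *
            ((Real.sqrt (x e.1 * x e'.1) : ℝ) : ℂ)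
        else 0 := by
  rw [revMat_mul_apply, KacWard, Matrix.sub_apply, one_apply, KWT, of_apply]
  simp only [oHead_oRev, oRev_oRev, oDir_oRev, eq_comm (a := oRev e)]
  rfl

theorem unitDir_mul_add_unitDir_mul_eq_zero {ends : F → V × V} {pos : V → ℂ} (x : F → ℝ)
    (hdir : ∀ p : F × Bool, oDir ends pos p ≠ 0)
    (hray : ∀ e e' : F × Bool, oTail ends e = oTail ends e' → e.1 ≠ e'.1 →
      ¬SameRay ℝ (oDir ends pos e) (oDir ends pos e'))
    (e e' : F × Bool) :
    unitDir ends pos e * (revMat F * KacWard ends pos x) e e' +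
      unitDir ends pos e' * (revMat F * KacWard ends pos x) e' e = 0 := by
  rw [revMat_mul_kacWard_apply, revMat_mul_kacWard_apply]
  by_cases hrev : e' = oRev e
  · subst hrev
    have htail : oTail ends e ≠ oHead ends e := fun h => hdir e (by rw [oDir, h, sub_self])
    simp [htail, htail.symm, unitDir_oRev]
  have hrev' : e ≠ oRev e' := fun h => hrev (by rw [h, oRev_oRev])
  by_cases hshort : oTail ends e = oTail ends e' ∧ e' ≠ e
  · have hshort' : oTail ends e' = oTail ends e ∧ e ≠ e' := ⟨hshort.1.symm, Ne.symm hshort.2⟩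
    have hfst : e.1 ≠ e'.1 := fun h => (eq_or_eq_oRev_of_fst_eq h).elim hshort.2 hrev
    have key := Complex.unit_mul_exp_half_arg_add_eq_zero (hdir e) (hdir e')
      (hray e e' hshort.1 hfst)
    rw [if_neg hrev, if_neg hrev', if_pos hshort, if_pos hshort', mul_comm (x e'.1)]
    simp only [unitDir]
    linear_combination (-(Real.sqrt (x e.1 * x e'.1) : ℂ)) * key
  · have hshort' : ¬(oTail ends e' = oTail ends e ∧ e ≠ e') :=
      fun h => hshort ⟨h.1.symm, Ne.symm h.2⟩
    simp [hrev, hrev', hshort, hshort']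

end KacWard

theorem statement17_general [DecidableEq V] [Fintype F] [DecidableEq F]
    (ends : F → V × V) (pos : V → ℂ) (x : F → ℝ)
    (hinj : Function.Injective pos)
    (hloop : ∀ f : F, (ends f).1 ≠ (ends f).2)
    (hplanar : ∀ f g : F, f ≠ g → ∀ z : ℂ,
      z ∈ openSegment ℝ (pos (ends f).1) (pos (ends f).2) →
      z ∈ openSegment ℝ (pos (ends g).1) (pos (ends g).2) → False)
    (E : Finset (F × Bool))
    (hodd : Odd E.card) :
    ((revMat F * KacWard ends pos x).submatrix
        (fun p : {p : F × Bool // p ∉ E} => (p : F × Bool))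
        (fun p : {p : F × Bool // p ∉ E} => (p : F × Bool))).det = 0 := by
  have hdir : ∀ p : F × Bool, oDir ends pos p ≠ 0 := oDir_ne_zero hinj hloop
  have hray : ∀ e e' : F × Bool, oTail ends e = oTail ends e' → e.1 ≠ e'.1 →
      ¬SameRay ℝ (oDir ends pos e) (oDir ends pos e') :=
    fun _ _ htail hne => not_sameRay_oDir hdir hplanar htail hne
  have hcard : Even (Fintype.card (F × Bool)) := by
    rw [Fintype.card_prod, Fintype.card_bool]
    exact even_two.mul_left _
  exact Matrix.det_eq_zero_of_diagonal_mul_skew (d := fun p => unitDir ends pos p.1)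
    (fun p => (unitDir_ne_zero (hdir p.1)).isUnit)
    (fun p q => unitDir_mul_add_unitDir_mul_eq_zero x hdir hray p.1 q.1)
    (Fintype.odd_card_subtype_notMem hcard hodd)

/-- Let `K = J·KW(G,x)` be the Kac–Ward-type Hermitian matrix of a
finite planar weighted graph, and let `E` be a set of inward oriented boundary edges
(oriented edges whose origin is a univalent vertex).  If `|E|` is odd, then the
determinant of the submatrix `K^E` of `K` obtained by removing the rows and columns
indexed by `E` vanishes: `det K^E = 0`. -/
theorem statement17 [Fintype V] [DecidableEq V] [Fintype F] [DecidableEq F]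
    (ends : F → V × V) (pos : V → ℂ) (x : F → ℝ)
    (hx : ∀ f, 0 ≤ x f)
    (hinj : Function.Injective pos)
    (hloop : ∀ f : F, (ends f).1 ≠ (ends f).2)
    (hplanar : ∀ f g : F, f ≠ g → ∀ z : ℂ,
      z ∈ openSegment ℝ (pos (ends f).1) (pos (ends f).2) →
      z ∈ openSegment ℝ (pos (ends g).1) (pos (ends g).2) → False)
    (hvert : ∀ (f : F) (v : V),
      pos v ∉ openSegment ℝ (pos (ends f).1) (pos (ends f).2))
    (E : Finset (F × Bool))
    (hbd : ∀ e ∈ E,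
      (Finset.univ.filter (fun f : F => (ends f).1 = oTail ends e)).card +
        (Finset.univ.filter (fun f : F => (ends f).2 = oTail ends e)).card = 1)
    (hodd : Odd E.card) :
    ((revMat F * KacWard ends pos x).submatrix
        (fun p : {p : F × Bool // p ∉ E} => (p : F × Bool))
        (fun p : {p : F × Bool // p ∉ E} => (p : F × Bool))).det = 0 :=
  statement17_general ends pos x hinj hloop hplanar E hodd
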